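/- arXiv:1510.04201 — 2 statements merged into one kernel-verified Lean document; each statement's English description precedes it below -/
import Mathlib

section
/- If u ∈ Φ^{1,p}_0(Ω) with 1 < p < N, then |∇u|^{p−1} ∈ L^q(Ω) for every q < N/(N−1) and |u|^{p−1} ∈ L^r(Ω) for every r < N/(N−p). -/
open MeasureTheory Filter Topology Set

noncomputable section

/-- The truncation at level `k`. -/
def Tk (k s : ℝ) : ℝ := if |s| ≤ k then s else k * s / |s|

/-- `φ_p'(s) = ((1+s²)(log(e+s²))⁴)^{-1/(2p)}`. -/
def phip' (p s : ℝ) : ℝ :=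
  ((1 + s ^ 2) * (Real.log (Real.exp 1 + s ^ 2)) ^ 4) ^ (-(1 / (2 * p)))

/-- `φ_p(s) = ∫₀ˢ φ_p'` -/
def phip (p s : ℝ) : ℝ := ∫ t in (0:ℝ)..s, phip' p t

variable {N : ℕ}

/-- Membership in `W^{1,p}_0(Ω)` with weak gradient `gu`: `u` and `gu` are `p`-integrable
on `Ω` and `u` is approximable, together with its gradient, in `L^p` by smooth functions
with compact support contained in `Ω`. -/
def MemW1p0 (p : ℝ) (Ω : Set (EuclideanSpace ℝ (Fin N)))
    (u : EuclideanSpace ℝ (Fin N) → ℝ)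
    (gu : EuclideanSpace ℝ (Fin N) → EuclideanSpace ℝ (Fin N)) : Prop :=
  MemLp u (ENNReal.ofReal p) (volume.restrict Ω) ∧
  MemLp gu (ENNReal.ofReal p) (volume.restrict Ω) ∧
  ∀ ε > 0, ∃ φ : EuclideanSpace ℝ (Fin N) → ℝ,
    ContDiff ℝ (⊤ : ℕ∞) φ ∧ HasCompactSupport φ ∧ tsupport φ ⊆ Ω ∧
    (∫ x in Ω, |u x - φ x| ^ p) < ε ∧ (∫ x in Ω, ‖gu x - gradient φ x‖ ^ p) < ε

/-- Membership in `T^{1,p}_0(Ω)` with generalized gradient `gu`: every truncation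
`T_k(u)` belongs to `W^{1,p}_0(Ω)`, with `∇[T_k(u)] = χ_{{|u|<k}} gu`. -/
def MemT1p0 (p : ℝ) (Ω : Set (EuclideanSpace ℝ (Fin N)))
    (u : EuclideanSpace ℝ (Fin N) → ℝ)
    (gu : EuclideanSpace ℝ (Fin N) → EuclideanSpace ℝ (Fin N)) : Prop :=
  ∀ k : ℝ, 0 < k →
    MemW1p0 p Ω (fun x => Tk k (u x)) (fun x => if |u x| < k then gu x else 0)

/-- Membership in `Φ^{1,p}_0(Ω)` with generalized gradient `gu`:
`φ_p(u) ∈ W^{1,p}_0(Ω)` with `∇[φ_p(u)] = φ_p'(u) gu`. -/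
def MemPhi1p0 (p : ℝ) (Ω : Set (EuclideanSpace ℝ (Fin N)))
    (u : EuclideanSpace ℝ (Fin N) → ℝ)
    (gu : EuclideanSpace ℝ (Fin N) → EuclideanSpace ℝ (Fin N)) : Prop :=
  MemT1p0 p Ω u gu ∧
  MemW1p0 p Ω (fun x => phip p (u x)) (fun x => phip' p (u x) • gu x)

/-!
By the Sobolev embedding, `φ_p(u) ∈ L^{p*}(Ω)` with `p* = Np/(N-p)`. Since `φ_p'` is even and
decreasing on `[0, ∞)`, `φ_p(s) ≥ s φ_p'(s)` for `s ≥ 0`, while `φ_p'(s) ≥ s^{-γ}` for large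
`s` whenever `γ > 1/p` (the logarithmic factor is dominated by any power). Together these give
`φ_p'(s)^{-β} ≤ C + |φ_p(s)|^{p*}` for `β < (p-1) p*`, so such negative powers of `φ_p'(u)`
are integrable on the bounded set `Ω`. Both claims reduce to them: `|u| ≤ φ_p'(u)^{-p}`, and
`|∇u|^{p-1} = φ_p'(u)^{-(p-1)} |φ_p'(u) ∇u|^{p-1}` with the last factor in `L^{p/(p-1)}`, so
that Hölder's inequality applies.
-/

open Real
open scoped ENNReal NNReal

def phipBase (s : ℝ) : ℝ := (1 + s ^ 2) * log (exp 1 + s ^ 2) ^ 4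

lemma phip'_eq_phipBase_rpow (p s : ℝ) : phip' p s = phipBase s ^ (-(1 / (2 * p))) := rfl

lemma one_le_log_exp_one_add_sq (s : ℝ) : 1 ≤ log (exp 1 + s ^ 2) := by
  rw [le_log_iff_exp_le (by positivity)]
  nlinarith [sq_nonneg s]

lemma sq_le_phipBase (s : ℝ) : s ^ 2 ≤ phipBase s := by
  have := one_le_pow₀ (n := 4) (one_le_log_exp_one_add_sq s)
  unfold phipBase; nlinarith [sq_nonneg s]

lemma phipBase_pos (s : ℝ) : 0 < phipBase s := by
  have := one_le_pow₀ (n := 4) (one_le_log_exp_one_add_sq s)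
  unfold phipBase; positivity

lemma phipBase_abs (s : ℝ) : phipBase |s| = phipBase s := by
  simp [phipBase]

lemma phipBase_monotoneOn : MonotoneOn phipBase (Ici 0) := by
  intro a ha b _ hab
  have hsq : a ^ 2 ≤ b ^ 2 := pow_le_pow_left₀ ha hab 2
  have hlog : log (exp 1 + a ^ 2) ≤ log (exp 1 + b ^ 2) :=
    log_le_log (by positivity) (by linarith)
  have hlog0 := (one_le_log_exp_one_add_sq a).trans' zero_le_one
  unfold phipBase
  gcongr

lemma continuous_phipBase : Continuous phipBase := by
  unfold phipBase
  exact (continuous_const.add (continuous_pow 2)).mul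
    (((continuous_const.add (continuous_pow 2)).log fun s =>
      (by positivity : 0 < exp 1 + s ^ 2).ne').pow 4)

lemma log_exp_one_add_sq_le {ε s : ℝ} (hε : 0 < ε) (hs : 1 ≤ s) :
    log (exp 1 + s ^ 2) ≤ 4 ^ ε / ε * s ^ (2 * ε) := by
  have he : exp 1 + s ^ 2 ≤ 4 * s ^ 2 := by nlinarith [exp_one_lt_d9]
  calc log (exp 1 + s ^ 2) ≤ (exp 1 + s ^ 2) ^ ε / ε := log_le_rpow_div (by positivity) hε
    _ ≤ (4 * s ^ 2) ^ ε / ε := by gcongr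
    _ = 4 ^ ε / ε * s ^ (2 * ε) := by
      rw [mul_rpow (by norm_num) (by positivity), ← rpow_natCast s 2,
        ← rpow_mul (by positivity)]
      push_cast; ring

lemma phipBase_le_mul_rpow {ε s : ℝ} (hε : 0 < ε) (hs : 1 ≤ s) :
    phipBase s ≤ 2 * (4 ^ ε / ε) ^ 4 * s ^ (2 + 8 * ε) := by
  have hlog0 := (one_le_log_exp_one_add_sq s).trans' zero_le_one
  calc phipBase s ≤ (2 * s ^ 2) * (4 ^ ε / ε * s ^ (2 * ε)) ^ 4 := by
        unfold phipBase
        gcongr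
        · nlinarith
        · exact log_exp_one_add_sq_le hε hs
    _ = 2 * (4 ^ ε / ε) ^ 4 * s ^ (2 + 8 * ε) := by
      have hs0 : 0 < s := by linarith
      rw [mul_pow, ← rpow_natCast (s ^ (2 * ε)), ← rpow_mul hs0.le, rpow_add hs0,
        ← rpow_natCast s 2]
      push_cast; ring_nf

lemma eventually_phipBase_le_rpow {κ : ℝ} (hκ : 2 < κ) :
    ∀ᶠ s in atTop, phipBase s ≤ s ^ κ := by
  -- `2 + 8ε + 8ε = κ`, and the second `s ^ (8ε)` absorbs the constant
  set ε := (κ - 2) / 16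
  have hε : 0 < ε := div_pos (by linarith) (by norm_num)
  filter_upwards [eventually_ge_atTop 1,
    (tendsto_rpow_atTop (by positivity : 0 < 8 * ε)).eventually_ge_atTop
      (2 * (4 ^ ε / ε) ^ 4)] with s hs hC
  calc phipBase s ≤ 2 * (4 ^ ε / ε) ^ 4 * s ^ (2 + 8 * ε) := phipBase_le_mul_rpow hε hs
    _ ≤ s ^ (8 * ε) * s ^ (2 + 8 * ε) := by gcongr
    _ = s ^ κ := by rw [← rpow_add (by linarith)]; congr 1; ring

lemma phip'_pos (p s : ℝ) : 0 < phip' p s := rpow_pos_of_pos (phipBase_pos s) _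

lemma phip'_abs (p s : ℝ) : phip' p |s| = phip' p s := by
  simp only [phip'_eq_phipBase_rpow, phipBase_abs]

lemma continuous_phip' (p : ℝ) : Continuous (phip' p) :=
  continuous_phipBase.rpow_const fun s => Or.inl (phipBase_pos s).ne'

lemma phip'_antitoneOn {p : ℝ} (hp : 0 < p) : AntitoneOn (phip' p) (Ici 0) :=
  fun _ ha _ _ hab => rpow_le_rpow_of_nonpos (phipBase_pos _) (phipBase_monotoneOn ha
    (ha.out.trans hab) hab) (by simp only [neg_nonpos]; positivity)

lemma abs_le_phip'_rpow_neg {p : ℝ} (hp : 0 < p) (s : ℝ) : |s| ≤ phip' p s ^ (-p) := by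
  rw [phip'_eq_phipBase_rpow, ← rpow_mul (phipBase_pos s).le,
    show -(1 / (2 * p)) * -p = 1 / 2 by field_simp, ← sqrt_eq_rpow, ← sqrt_sq_eq_abs]
  exact sqrt_le_sqrt (sq_le_phipBase s)

lemma abs_rpow_le_phip'_rpow_neg {p b : ℝ} (hp : 0 < p) (hb : 0 ≤ b) (s : ℝ) :
    |s| ^ b ≤ phip' p s ^ (-(p * b)) := by
  rw [neg_mul_eq_neg_mul, rpow_mul (phip'_pos p s).le]
  exact rpow_le_rpow (abs_nonneg s) (abs_le_phip'_rpow_neg hp s) hb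

lemma eventually_rpow_neg_le_phip' {p γ : ℝ} (hp : 0 < p) (hγ : 1 / p < γ) :
    ∀ᶠ s in atTop, s ^ (-γ) ≤ phip' p s := by
  have hκ : 2 < 2 * p * γ := by
    rw [div_lt_iff₀ hp] at hγ; linarith
  filter_upwards [eventually_gt_atTop 0, eventually_phipBase_le_rpow hκ] with s hs hB
  calc s ^ (-γ) = (s ^ (2 * p * γ)) ^ (-(1 / (2 * p))) := by
        rw [← rpow_mul hs.le]; congr 1; field_simp
    _ ≤ phip' p s := rpow_le_rpow_of_nonpos (phipBase_pos s) hB (by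
        simp only [neg_nonpos]; positivity)

lemma phip_nonneg (p : ℝ) {s : ℝ} (hs : 0 ≤ s) : 0 ≤ phip p s :=
  intervalIntegral.integral_nonneg hs fun t _ => (phip'_pos p t).le

lemma phip_neg (p s : ℝ) : phip p (-s) = -phip p s := by
  have heven : (fun t => phip' p (-t)) = phip' p := by
    ext t; rw [← phip'_abs, abs_neg, phip'_abs]
  unfold phip
  rw [← intervalIntegral.integral_symm, ← neg_zero, ← intervalIntegral.integral_comp_neg,
    heven, neg_zero]

lemma abs_phip (p s : ℝ) : |phip p s| = phip p |s| := by
  rcases le_or_gt 0 s with hs | hs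
  · rw [abs_of_nonneg hs, abs_of_nonneg (phip_nonneg p hs)]
  · rw [abs_of_neg hs, phip_neg, abs_of_nonpos]
    rw [← neg_nonneg, ← phip_neg]
    exact phip_nonneg p (by linarith)

lemma mul_phip'_le_phip {p : ℝ} (hp : 0 < p) {s : ℝ} (hs : 0 ≤ s) :
    s * phip' p s ≤ phip p s := by
  have h := intervalIntegral.integral_mono_on hs (intervalIntegrable_const (μ := volume))
    ((continuous_phip' p).intervalIntegrable 0 s)
    fun t ht => phip'_antitoneOn hp ht.1 (ht.1.trans ht.2) ht.2
  simpa [mul_comm, phip] using h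

lemma eventually_phip'_rpow_neg_le_phip_rpow {p q β : ℝ} (hp : 0 < p) (hq : 0 < q) (hβ : 0 ≤ β)
    (hβq : β < (p - 1) * q) : ∀ᶠ s in atTop, phip' p s ^ (-β) ≤ phip p s ^ q := by
  have hγ : 1 / p < q / (β + q) := by
    rw [div_lt_div_iff₀ hp (by positivity)]; linarith
  filter_upwards [eventually_gt_atTop 0, eventually_rpow_neg_le_phip' hp hγ] with s hs hφ'
  have hφ'0 := phip'_pos p s
  have hdecay : phip' p s ^ (-(β + q)) ≤ s ^ q := by
    calc phip' p s ^ (-(β + q)) ≤ (s ^ (-(q / (β + q)))) ^ (-(β + q)) :=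
          rpow_le_rpow_of_nonpos (by positivity) hφ' (by linarith)
      _ = s ^ q := by rw [← rpow_mul hs.le]; congr 1; field_simp
  calc phip' p s ^ (-β) = phip' p s ^ (-(β + q)) * phip' p s ^ q := by
        rw [← rpow_add hφ'0]; ring_nf
    _ ≤ s ^ q * phip' p s ^ q := by gcongr
    _ = (s * phip' p s) ^ q := (mul_rpow hs.le hφ'0.le).symm
    _ ≤ phip p s ^ q := by gcongr; exact mul_phip'_le_phip hp hs.le

lemma exists_phip'_rpow_neg_le_add {p q β : ℝ} (hp : 0 < p) (hq : 0 < q) (hβ : 0 ≤ β)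
    (hβq : β < (p - 1) * q) : ∃ C, ∀ s, phip' p s ^ (-β) ≤ C + |phip p s| ^ q := by
  obtain ⟨M, hM⟩ :=
    (eventually_phip'_rpow_neg_le_phip_rpow hp hq hβ hβq).exists_forall_of_atTop
  refine ⟨phip' p M ^ (-β), fun s => ?_⟩
  rw [← phip'_abs, abs_phip]
  rcases le_total |s| M with hsM | hMs
  · have := rpow_le_rpow_of_nonpos (phip'_pos p M)
      (phip'_antitoneOn hp (abs_nonneg s) ((abs_nonneg s).trans hsM) hsM) (neg_nonpos.2 hβ)
    have := rpow_nonneg (phip_nonneg p (abs_nonneg s)) q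
    linarith
  · have := rpow_nonneg (phip'_pos p M).le (-β)
    linarith [hM |s| hMs]

section LpLemmas

variable {α E : Type*} [MeasurableSpace α] {μ : Measure α} [NormedAddCommGroup E]

lemma aestronglyMeasurable_of_eventually_eq {F : ℕ → α → E} {f : α → E}
    (hF : ∀ n, AEStronglyMeasurable (F n) μ) (hFf : ∀ x, ∀ᶠ n in atTop, F n x = f x) :
    AEStronglyMeasurable f μ :=
  aestronglyMeasurable_of_tendsto_ae atTop hF
    (ae_of_all _ fun x => tendsto_const_nhds.congr' (EventuallyEq.symm (hFf x)))

lemma memLp_ofReal_of_norm_rpow_le {f : α → E} {h : α → ℝ} {t : ℝ} (ht : 0 < t)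
    (hf : AEStronglyMeasurable f μ) (hh : Integrable h μ) (hfh : ∀ x, ‖f x‖ ^ t ≤ h x) :
    MemLp f (ENNReal.ofReal t) μ := by
  rw [← integrable_norm_rpow_iff hf (by simpa using ht) ENNReal.ofReal_ne_top,
    ENNReal.toReal_ofReal ht.le]
  refine hh.mono' (hf.norm.aemeasurable.pow_const t).aestronglyMeasurable
    (ae_of_all _ fun x => ?_)
  rw [Real.norm_of_nonneg (by positivity)]
  exact hfh x

lemma tendsto_eLpNorm_zero_of_tendsto_integral {f : ℕ → α → E} {p : ℝ} (hp : 0 < p)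
    (hf : ∀ n, MemLp (f n) (ENNReal.ofReal p) μ)
    (h : Tendsto (fun n => ∫ x, ‖f n x‖ ^ p ∂μ) atTop (𝓝 0)) :
    Tendsto (fun n => eLpNorm (f n) (ENNReal.ofReal p) μ) atTop (𝓝 0) := by
  have hp0 : ENNReal.ofReal p ≠ 0 := by simpa using hp
  simp_rw [fun n => (hf n).eLpNorm_eq_integral_rpow_norm hp0 ENNReal.ofReal_ne_top,
    ENNReal.toReal_ofReal hp.le]
  have hcont : ContinuousAt (fun y : ℝ => ENNReal.ofReal (y ^ p⁻¹)) 0 :=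
    ENNReal.continuous_ofReal.continuousAt.comp
      (Real.continuousAt_rpow_const 0 p⁻¹ (Or.inr (by positivity)))
  have := hcont.tendsto.comp h
  rwa [Real.zero_rpow (inv_pos.2 hp).ne', ENNReal.ofReal_zero] at this

lemma eventually_eLpNorm_le_add_one {f : ℕ → α → E} {g : α → E} {p : ℝ≥0∞} (hp : 1 ≤ p)
    (hf : ∀ n, AEStronglyMeasurable (f n) μ) (hg : AEStronglyMeasurable g μ)
    (hfg : Tendsto (fun n => eLpNorm (g - f n) p μ) atTop (𝓝 0)) :
    ∀ᶠ n in atTop, eLpNorm (f n) p μ ≤ eLpNorm g p μ + 1 := by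
  filter_upwards [hfg.eventually (ge_mem_nhds one_pos)] with n hn
  calc eLpNorm (f n) p μ = eLpNorm (g - (g - f n)) p μ := by rw [sub_sub_cancel]
    _ ≤ eLpNorm g p μ + eLpNorm (g - f n) p μ := eLpNorm_sub_le hg (hg.sub (hf n)) hp
    _ ≤ eLpNorm g p μ + 1 := by gcongr

lemma eLpNorm_le_of_tendsto_eLpNorm_sub {f : ℕ → α → E} {g : α → E} {p r K : ℝ≥0∞}
    (hp : p ≠ 0) (hf : ∀ n, AEStronglyMeasurable (f n) μ) (hg : AEStronglyMeasurable g μ)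
    (hfg : Tendsto (fun n => eLpNorm (f n - g) p μ) atTop (𝓝 0))
    (hK : ∀ᶠ n in atTop, eLpNorm (f n) r μ ≤ K) : eLpNorm g r μ ≤ K := by
  obtain ⟨ns, hns, hae⟩ :=
    (tendstoInMeasure_of_tendsto_eLpNorm hp hf hg hfg).exists_seq_tendsto_ae
  calc eLpNorm g r μ ≤ atTop.liminf fun i => eLpNorm (f (ns i)) r μ :=
        Lp.eLpNorm_lim_le_liminf_eLpNorm (fun i => hf (ns i)) g hae
    _ ≤ K := liminf_le_of_frequently_le' (hns.tendsto_atTop.eventually hK).frequently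

end LpLemmas

section Sobolev

variable {E : Type*} [NormedAddCommGroup E] [InnerProductSpace ℝ E] [CompleteSpace E]

lemma norm_gradient_eq_norm_fderiv (f : E → ℝ) (x : E) : ‖gradient f x‖ = ‖fderiv ℝ f x‖ :=
  (InnerProductSpace.toDual ℝ E).symm.norm_map _

lemma support_gradient_subset_tsupport (f : E → ℝ) :
    Function.support (gradient f) ⊆ tsupport f := fun x hx =>
  support_fderiv_subset ℝ fun h => hx (by simp [gradient, h])

lemma ContDiff.continuous_gradient {f : E → ℝ} (hf : ContDiff ℝ 1 f) : Continuous (gradient f) :=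
  (InnerProductSpace.toDual ℝ E).symm.continuous.comp (hf.continuous_fderiv one_ne_zero)

lemma HasCompactSupport.gradient {f : E → ℝ} (hf : HasCompactSupport f) :
    HasCompactSupport (gradient f) :=
  hf.mono' (support_gradient_subset_tsupport f)

variable [FiniteDimensional ℝ E] [MeasurableSpace E] [BorelSpace E]

lemma eLpNorm_restrict_le_eLpNorm_gradient (μ : Measure E) [μ.IsAddHaarMeasure] {Ω : Set E}
    {φ : E → ℝ} (hφ : ContDiff ℝ 1 φ) (hφc : HasCompactSupport φ) (hφΩ : tsupport φ ⊆ Ω)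
    {p q : ℝ≥0} (hp : 1 ≤ p) (hE : 0 < Module.finrank ℝ E)
    (hq : (q : ℝ)⁻¹ = p⁻¹ - (Module.finrank ℝ E : ℝ)⁻¹) :
    eLpNorm φ q (μ.restrict Ω) ≤
      SNormLESNormFDerivOfEqConst ℝ μ p * eLpNorm (gradient φ) p (μ.restrict Ω) :=
  calc eLpNorm φ q (μ.restrict Ω) ≤ eLpNorm φ q μ := eLpNorm_restrict_le _ _ _ _
    _ ≤ SNormLESNormFDerivOfEqConst ℝ μ p * eLpNorm (fderiv ℝ φ) p μ :=
      eLpNorm_le_eLpNorm_fderiv_of_eq μ hφ hφc hp hE hq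
    _ = SNormLESNormFDerivOfEqConst ℝ μ p * eLpNorm (gradient φ) p (μ.restrict Ω) := by
      rw [eLpNorm_restrict_eq_of_support_subset ((support_gradient_subset_tsupport φ).trans hφΩ),
        eLpNorm_congr_norm_ae (ae_of_all _ fun x => (norm_gradient_eq_norm_fderiv φ x).symm)]

end Sobolev

variable {Ω : Set (EuclideanSpace ℝ (Fin N))}

lemma MemW1p0.exists_tendsto {p : ℝ} (hp : 0 < p) {v : EuclideanSpace ℝ (Fin N) → ℝ}
    {gv : EuclideanSpace ℝ (Fin N) → EuclideanSpace ℝ (Fin N)} (hv : MemW1p0 p Ω v gv) :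
    ∃ φ : ℕ → EuclideanSpace ℝ (Fin N) → ℝ,
      (∀ n, ContDiff ℝ 1 (φ n) ∧ HasCompactSupport (φ n) ∧ tsupport (φ n) ⊆ Ω) ∧
      Tendsto (fun n => eLpNorm (v - φ n) (ENNReal.ofReal p) (volume.restrict Ω)) atTop (𝓝 0) ∧
      Tendsto (fun n => eLpNorm (gv - gradient (φ n)) (ENNReal.ofReal p) (volume.restrict Ω))
        atTop (𝓝 0) := by
  choose φ hφ hφc hφΩ hφv hφg using fun n : ℕ => hv.2.2 (1 / (n + 1)) Nat.one_div_pos_of_nat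
  have hsmall {F : ℕ → ℝ} (h0 : ∀ n, 0 ≤ F n) (h1 : ∀ n, F n < 1 / (n + 1)) :
      Tendsto F atTop (𝓝 0) :=
    tendsto_of_tendsto_of_tendsto_of_le_of_le tendsto_const_nhds
      tendsto_one_div_add_atTop_nhds_zero_nat h0 fun n => (h1 n).le
  have hφ1 (n : ℕ) : ContDiff ℝ 1 (φ n) := (hφ n).of_le (by exact_mod_cast le_top)
  refine ⟨φ, fun n => ⟨hφ1 n, hφc n, hφΩ n⟩, ?_, ?_⟩
  · refine tendsto_eLpNorm_zero_of_tendsto_integral hp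
      (fun n => hv.1.sub ((hφ1 n).continuous.memLp_of_hasCompactSupport (hφc n)))
      (hsmall (fun n => integral_nonneg fun x => by positivity) fun n => ?_)
    simpa only [Pi.sub_apply, Real.norm_eq_abs] using hφv n
  · exact tendsto_eLpNorm_zero_of_tendsto_integral hp
      (fun n => hv.2.1.sub ((hφ1 n).continuous_gradient.memLp_of_hasCompactSupport
        (hφc n).gradient))
      (hsmall (fun n => integral_nonneg fun x => by positivity) hφg)

theorem MemW1p0.memLp_sobolev {p : ℝ} (hp : 1 < p) (hpN : p < N)
    {v : EuclideanSpace ℝ (Fin N) → ℝ} {gv : EuclideanSpace ℝ (Fin N) → EuclideanSpace ℝ (Fin N)}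
    (hv : MemW1p0 p Ω v gv) :
    MemLp v (ENNReal.ofReal (N * p / (N - p))) (volume.restrict Ω) := by
  obtain ⟨φ, hφ, hφv, hφg⟩ := hv.exists_tendsto (by linarith)
  have hNp : 0 < (N : ℝ) - p := by linarith
  have hN0 : (N : ℝ) ≠ 0 := by linarith
  have hN : 0 < Module.finrank ℝ (EuclideanSpace ℝ (Fin N)) := by
    rw [finrank_euclideanSpace_fin]; exact_mod_cast (by linarith : (0 : ℝ) < N)
  have hexp : ((N * p / (N - p)).toNNReal : ℝ)⁻¹ =
      (p.toNNReal : ℝ)⁻¹ - (Module.finrank ℝ (EuclideanSpace ℝ (Fin N)) : ℝ)⁻¹ := by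
    rw [Real.coe_toNNReal _ (by positivity), Real.coe_toNNReal _ (by positivity),
      finrank_euclideanSpace_fin]
    field_simp
  have hbound : ∀ᶠ n in atTop,
      eLpNorm (φ n) (ENNReal.ofReal (N * p / (N - p))) (volume.restrict Ω) ≤
        SNormLESNormFDerivOfEqConst ℝ (volume : Measure (EuclideanSpace ℝ (Fin N))) p.toNNReal *
          (eLpNorm gv (ENNReal.ofReal p) (volume.restrict Ω) + 1) := by
    filter_upwards [eventually_eLpNorm_le_add_one (ENNReal.one_le_ofReal.2 hp.le)
      (fun n => (hφ n).1.continuous_gradient.aestronglyMeasurable) hv.2.1.1 hφg] with n hn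
    exact (eLpNorm_restrict_le_eLpNorm_gradient _ (hφ n).1 (hφ n).2.1 (hφ n).2.2
      (Real.one_le_toNNReal.2 hp.le) hN hexp).trans (by gcongr; exact hn)
  have hp0 : ENNReal.ofReal p ≠ 0 := by simp only [ne_eq, ENNReal.ofReal_eq_zero]; linarith
  refine ⟨hv.1.1, (eLpNorm_le_of_tendsto_eLpNorm_sub hp0
    (fun n => (hφ n).1.continuous.aestronglyMeasurable) hv.1.1
    (by simpa only [eLpNorm_sub_comm] using hφv) hbound).trans_lt ?_⟩
  exact ENNReal.mul_lt_top ENNReal.coe_lt_top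
    (ENNReal.add_lt_top.2 ⟨hv.2.1.eLpNorm_lt_top, ENNReal.one_lt_top⟩)

lemma MemT1p0.aestronglyMeasurable {p : ℝ} {u : EuclideanSpace ℝ (Fin N) → ℝ}
    {g : EuclideanSpace ℝ (Fin N) → EuclideanSpace ℝ (Fin N)} (hu : MemT1p0 p Ω u g) :
    AEStronglyMeasurable u (volume.restrict Ω) := by
  refine aestronglyMeasurable_of_eventually_eq (fun n : ℕ => (hu (n + 1) n.cast_add_one_pos).1.1)
    fun x => ?_
  filter_upwards [tendsto_natCast_atTop_atTop.eventually_ge_atTop |u x|] with n hn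
  exact if_pos (by linarith)

section PhiComposition

variable {α : Type*} [MeasurableSpace α] {μ : Measure α}

lemma memLp_phip'_comp_rpow_neg [IsFiniteMeasure μ] {p q γ t : ℝ} (hp : 0 < p) (hq : 0 < q)
    (hγ : 0 ≤ γ) (ht : 0 < t) (hγt : γ * t < (p - 1) * q) {u : α → ℝ}
    (hu : AEStronglyMeasurable u μ) (hφu : MemLp (fun x => phip p (u x)) (ENNReal.ofReal q) μ) :
    MemLp (fun x => phip' p (u x) ^ (-γ)) (ENNReal.ofReal t) μ := by
  obtain ⟨C, hC⟩ := exists_phip'_rpow_neg_le_add hp hq (by positivity) hγt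
  have hint : Integrable (fun x => ‖phip p (u x)‖ ^ q) μ := by
    simpa only [ENNReal.toReal_ofReal hq.le] using
      (integrable_norm_rpow_iff hφu.1 (by simpa using hq) ENNReal.ofReal_ne_top).2 hφu
  refine memLp_ofReal_of_norm_rpow_le ht (((continuous_phip' p).rpow_const fun s =>
    Or.inl (phip'_pos p s).ne').comp_aestronglyMeasurable hu) ((integrable_const C).add hint)
    fun x => ?_
  simp only [Pi.add_apply, Real.norm_eq_abs]
  rw [abs_of_pos (rpow_pos_of_pos (phip'_pos p _) _), ← rpow_mul (phip'_pos p _).le, neg_mul]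
  exact hC (u x)

lemma memLp_norm_rpow_of_memLp_smul {E : Type*} [NormedAddCommGroup E] [NormedSpace ℝ E]
    {w : α → ℝ} {g : α → E} {p q t : ℝ} (hp : 1 < p) (ht : 0 < t) (hq : q⁻¹ = t⁻¹ + (p - 1) / p)
    (hw : ∀ x, 0 < w x) (hwg : MemLp (fun x => w x • g x) (ENNReal.ofReal p) μ)
    (hw' : MemLp (fun x => w x ^ (-(p - 1))) (ENNReal.ofReal t) μ) :
    MemLp (fun x => ‖g x‖ ^ (p - 1)) (ENNReal.ofReal q) μ := by
  have hp1 : 0 < p - 1 := by linarith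
  have hwg' : MemLp (fun x => ‖w x • g x‖ ^ (p - 1)) (ENNReal.ofReal (p / (p - 1))) μ := by
    have := hwg.norm_rpow_div (ENNReal.ofReal (p - 1))
    rwa [ENNReal.toReal_ofReal hp1.le, ← ENNReal.ofReal_div_of_pos hp1] at this
  have : ENNReal.HolderTriple (ENNReal.ofReal t) (ENNReal.ofReal (p / (p - 1)))
      (ENNReal.ofReal q) :=
    Real.HolderTriple.ennrealOfReal ⟨by rw [hq, inv_div], ht, by positivity⟩
  refine (hwg'.mul hw').ae_eq (ae_of_all _ fun x => ?_)
  have hwx := hw x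
  rw [Pi.mul_apply, norm_smul, Real.norm_of_nonneg hwx.le, mul_rpow hwx.le (norm_nonneg _),
    ← mul_assoc, ← rpow_add hwx, neg_add_cancel, rpow_zero, one_mul]

end PhiComposition

lemma exists_holder_exponent_lt {p q : ℝ} (hp : 1 < p) (hpN : p < N) (hq : 0 < q)
    (hqN : q < N / (N - 1)) :
    ∃ t, 0 < t ∧ t < N * p / (N - p) ∧ q⁻¹ = t⁻¹ + (p - 1) / p := by
  have hN1 : 0 < (N : ℝ) - 1 := by linarith
  have hNp : 0 < (N : ℝ) - p := by linarith
  have hN0 : (N : ℝ) ≠ 0 := by linarith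
  have hp0 : p ≠ 0 := by linarith
  have hq' : (N - 1) / N < q⁻¹ := by
    rwa [lt_inv_comm₀ (by positivity) hq, inv_div]
  have hgap : (N - p) / (N * p) < q⁻¹ - (p - 1) / p := by
    have : (N - p) / (N * p) + (p - 1) / p = (N - 1) / N := by
      field_simp; ring
    linarith
  have hpos : 0 < q⁻¹ - (p - 1) / p :=
    lt_of_le_of_lt (div_nonneg (by linarith) (by positivity)) hgap
  refine ⟨(q⁻¹ - (p - 1) / p)⁻¹, inv_pos.2 hpos, ?_, by rw [inv_inv]; ring⟩
  rwa [inv_lt_comm₀ hpos (div_pos (mul_pos (by linarith) (by linarith)) hNp), inv_div]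

theorem phi_summability_general (p : ℝ) (hp : 1 < p)
    {N : ℕ} (hpN : p < N)
    (Ω : Set (EuclideanSpace ℝ (Fin N))) (hΩb : Bornology.IsBounded Ω)
    (u : EuclideanSpace ℝ (Fin N) → ℝ)
    (g : EuclideanSpace ℝ (Fin N) → EuclideanSpace ℝ (Fin N))
    (hu : MemPhi1p0 p Ω u g) :
    (∀ q : ℝ, 0 < q → q < N / (N - 1) →
      MemLp (fun x => ‖g x‖ ^ (p - 1)) (ENNReal.ofReal q) (volume.restrict Ω)) ∧
    (∀ r : ℝ, 0 < r → r < N / (N - p) →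
      MemLp (fun x => |u x| ^ (p - 1)) (ENNReal.ofReal r) (volume.restrict Ω)) := by
  have : IsFiniteMeasure (volume.restrict Ω) :=
    isFiniteMeasure_restrict.2 hΩb.measure_lt_top.ne
  have hp0 : 0 < p := by linarith
  have hp1 : 0 < p - 1 := by linarith
  have hpstar : 0 < N * p / (N - p) := div_pos (mul_pos (by linarith) hp0) (by linarith)
  have hu_meas := hu.1.aestronglyMeasurable
  have hφu := hu.2.memLp_sobolev hp hpN
  refine ⟨fun q hq hqN => ?_, fun r hr hrN => ?_⟩
  · obtain ⟨t, ht, htp, hqt⟩ := exists_holder_exponent_lt hp hpN hq hqN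
    exact memLp_norm_rpow_of_memLp_smul hp ht hqt (fun x => phip'_pos p (u x)) hu.2.2.1
      (memLp_phip'_comp_rpow_neg hp0 hpstar hp1.le ht (by gcongr) hu_meas hφu)
  · have hγr : p * (p - 1) * r < (p - 1) * (N * p / (N - p)) :=
      calc p * (p - 1) * r < p * (p - 1) * (N / (N - p)) := by gcongr
        _ = (p - 1) * (N * p / (N - p)) := by ring
    refine (memLp_phip'_comp_rpow_neg hp0 hpstar (by positivity) hr hγr hu_meas
      hφu).mono (hu_meas.norm.aemeasurable.pow_const _).aestronglyMeasurable
      (ae_of_all _ fun x => ?_)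
    rw [Real.norm_of_nonneg (by positivity),
      Real.norm_of_nonneg (rpow_nonneg (phip'_pos p _).le _)]
    exact abs_rpow_le_phip'_rpow_neg hp0 hp1.le (u x)

theorem phi_summability (p : ℝ) (hp : 1 < p)
    {N : ℕ} (hN : 2 ≤ N) (hpN : p < N)
    (Ω : Set (EuclideanSpace ℝ (Fin N))) (hΩo : IsOpen Ω) (hΩb : Bornology.IsBounded Ω)
    (u : EuclideanSpace ℝ (Fin N) → ℝ)
    (g : EuclideanSpace ℝ (Fin N) → EuclideanSpace ℝ (Fin N))
    (hu : MemPhi1p0 p Ω u g) :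
    (∀ q : ℝ, 0 < q → q < N / (N - 1) →
      MemLp (fun x => ‖g x‖ ^ (p - 1)) (ENNReal.ofReal q) (volume.restrict Ω)) ∧
    (∀ r : ℝ, 0 < r → r < N / (N - p) →
      MemLp (fun x => |u x| ^ (p - 1)) (ENNReal.ofReal r) (volume.restrict Ω)) :=
  phi_summability_general p hp hpN Ω hΩb u g hu
end
end

section
/- Let X be a reflexive Banach space, U ⊆ X a bounded open set, F : closure(U) → X' continuous of class (S)_+, and w ∈ X' with w ∉ F(∂U). Then the set {u ∈ closure(U) : F(u) = w} is compact (possibly empty). -/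
/-!
A bounded sequence in a reflexive space has a weakly convergent subsequence: the closed span of
the sequence is separable and reflexive, so its dual is separable, and sequential Banach–Alaoglu
applies in its bidual. Along a sequence of solutions `F uₙ = w`, so
`⟨F uₙ, uₙ - u⟩ = ⟨w, uₙ - u⟩ → 0` and the `(S)₊` property upgrades weak to norm convergence.
The limit is again a solution because the solution set is closed, by continuity of `F`.
-/

open Filter Topology

/-- A map `F : D → X'` is of class `(S)_+` if for every sequence `(u_n)` in `D`
weakly converging to some `u` with `limsup ⟨F(u_n), u_n − u⟩ ≤ 0`,
one has `‖u_n − u‖ → 0`. -/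
def IsSPlusOn {X : Type*} [NormedAddCommGroup X] [NormedSpace ℝ X]
    (F : X → StrongDual ℝ X) (D : Set X) : Prop :=
  ∀ (u : ℕ → X) (v : X), (∀ n, u n ∈ D) →
    (∀ f : StrongDual ℝ X, Tendsto (fun n => f (u n)) atTop (nhds (f v))) →
    Filter.limsup (fun n => (F (u n)) (u n - v)) atTop ≤ 0 →
    Tendsto u atTop (nhds v)

open NormedSpace TopologicalSpace

section Dual

variable {E : Type*} [NormedAddCommGroup E] [NormedSpace ℝ E]

theorem Submodule.exists_dual_eq_zero_of_notMem (Y : Submodule ℝ E)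
    (hY : IsClosed (Y : Set E)) {x : E} (hx : x ∉ Y) :
    ∃ f : StrongDual ℝ E, (∀ y ∈ Y, f y = 0) ∧ f x ≠ 0 := by
  obtain ⟨f, c, hfY, hcx⟩ := geometric_hahn_banach_closed_point Y.convex hY hx
  have hc : 0 < c := by simpa using hfY 0 Y.zero_mem
  -- `f` is bounded above on the subspace `Y`, hence vanishes there
  have hf0 : ∀ y ∈ Y, f y = 0 := by
    intro y hy
    by_contra hfy
    have := hfY (((c + 1) / f y) • y) (Y.smul_mem _ hy)
    rw [map_smul, smul_eq_mul, div_mul_cancel₀ _ hfy] at this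
    linarith
  exact ⟨f, hf0, fun hfx => by linarith⟩

theorem Submodule.dense_of_forall_dual_eq_zero (Y : Submodule ℝ E)
    (hY : ∀ f : StrongDual ℝ E, (∀ y ∈ Y, f y = 0) → f = 0) : Dense (Y : Set E) := by
  refine Submodule.dense_iff_topologicalClosure_eq_top.mpr (Submodule.eq_top_iff'.mpr fun z => ?_)
  by_contra hz
  obtain ⟨f, hfY, hfz⟩ := Y.topologicalClosure.exists_dual_eq_zero_of_notMem
    (Submodule.isClosed_topologicalClosure _) hz
  refine hfz ?_
  rw [hY f fun y hy => hfY y (Y.le_topologicalClosure hy)]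
  rfl

theorem separableSpace_of_separableSpace_strongDual [SeparableSpace (StrongDual ℝ E)] :
    SeparableSpace E := by
  have : Nonempty (StrongDual ℝ E) := ⟨0⟩
  set g : ℕ → StrongDual ℝ E := denseSeq (StrongDual ℝ E)
  have hnorming : ∀ n, ∃ x : E, ‖x‖ ≤ 1 ∧ ‖g n‖ ≤ 2 * ‖g n x‖ := by
    intro n
    rcases eq_or_ne (g n) 0 with h | h
    · exact ⟨0, by simp, by simp [h]⟩
    · obtain ⟨x, hx1, hx2⟩ := (g n).exists_lt_apply_of_lt_opNorm
        (half_lt_self (norm_pos_iff.mpr h))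
      exact ⟨x, hx1.le, by linarith⟩
  choose x hx1 hx2 using hnorming
  -- `‖f‖ ≤ 3 ‖f - gₙ‖`, as `gₙ` almost attains its norm at `xₙ`, where `f` vanishes
  have hzero : ∀ f : StrongDual ℝ E, (∀ n, f (x n) = 0) → f = 0 := by
    intro f hf
    refine norm_le_zero_iff.mp (le_of_forall_pos_le_add fun ε hε => ?_)
    obtain ⟨n, hn⟩ := (denseRange_denseSeq _).exists_dist_lt f (by positivity : 0 < ε / 3)
    rw [dist_eq_norm] at hn
    have hgx : ‖g n (x n)‖ ≤ ‖f - g n‖ := by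
      calc ‖g n (x n)‖ = ‖(f - g n) (x n)‖ := by simp [hf n]
        _ ≤ ‖f - g n‖ * ‖x n‖ := (f - g n).le_opNorm _
        _ ≤ ‖f - g n‖ := mul_le_of_le_one_right (norm_nonneg _) (hx1 n)
    calc ‖f‖ ≤ ‖f - g n‖ + ‖g n‖ := norm_le_norm_sub_add f (g n)
      _ ≤ 0 + ε := by linarith [hx2 n]
  have hdense : Dense (Submodule.span ℝ (Set.range x) : Set E) :=
    Submodule.dense_of_forall_dual_eq_zero _ fun f hf =>
      hzero f fun n => hf _ (Submodule.subset_span (Set.mem_range_self n))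
  refine isSeparable_univ_iff.mp ?_
  rw [← hdense.closure_eq]
  exact (Set.countable_range x).isSeparable.span.closure

end Dual

section Reflexive

variable {X : Type*} [NormedAddCommGroup X] [NormedSpace ℝ X]

theorem Submodule.surjective_inclusionInDoubleDual
    (hrefl : Function.Surjective (inclusionInDoubleDual ℝ X))
    (Y : Submodule ℝ X) (hY : IsClosed (Y : Set X)) :
    Function.Surjective (inclusionInDoubleDual ℝ Y) := by
  intro ψ
  set restrict : StrongDual ℝ X →L[ℝ] StrongDual ℝ Y :=
    (ContinuousLinearMap.compL ℝ Y X ℝ).flip Y.subtypeL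
  obtain ⟨v, hv⟩ := hrefl (ψ.comp restrict)
  have hψ : ∀ f : StrongDual ℝ X, f v = ψ (restrict f) := fun f =>
    congrArg (fun Φ : StrongDual ℝ (StrongDual ℝ X) => Φ f) hv
  have hvY : v ∈ Y := by
    by_contra hvY
    obtain ⟨f, hfY, hfv⟩ := Y.exists_dual_eq_zero_of_notMem hY hvY
    have hf : restrict f = 0 := ContinuousLinearMap.ext fun y => hfY y y.2
    exact hfv (by rw [hψ, hf, map_zero])
  refine ⟨⟨v, hvY⟩, ContinuousLinearMap.ext fun g => ?_⟩
  obtain ⟨f, hfg, -⟩ := exists_extension_norm_eq Y g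
  have hf : restrict f = g := ContinuousLinearMap.ext hfg
  calc g ⟨v, hvY⟩ = f v := (hfg _).symm
    _ = ψ g := by rw [hψ, hf]

theorem exists_subseq_forall_dual_tendsto_of_separableSpace [SeparableSpace X]
    (hrefl : Function.Surjective (inclusionInDoubleDual ℝ X))
    {u : ℕ → X} {M : ℝ} (hM : ∀ n, ‖u n‖ ≤ M) :
    ∃ (φ : ℕ → ℕ) (v : X), StrictMono φ ∧
      ∀ f : StrongDual ℝ X, Tendsto (fun j => f (u (φ j))) atTop (𝓝 (f v)) := by
  have : SeparableSpace (StrongDual ℝ (StrongDual ℝ X)) :=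
    hrefl.denseRange.separableSpace (inclusionInDoubleDual ℝ X).continuous
  have : SeparableSpace (StrongDual ℝ X) :=
    separableSpace_of_separableSpace_strongDual (E := StrongDual ℝ X)
  -- sequential Banach–Alaoglu in `X''`, the weak-* dual of the separable space `X'`
  set ι : ℕ → WeakDual ℝ (StrongDual ℝ X) := fun n =>
    StrongDual.toWeakDual (inclusionInDoubleDual ℝ X (u n))
  have hι : ∀ n, ι n ∈ WeakDual.toStrongDual ⁻¹' Metric.closedBall 0 M := fun n =>
    (dist_zero_right (inclusionInDoubleDual ℝ X (u n))).trans_le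
      ((double_dual_bound ℝ X (u n)).trans (hM n))
  obtain ⟨ψ, -, φ, hφ, hψ⟩ := WeakDual.isSeqCompact_closedBall ℝ (StrongDual ℝ X) 0 M hι
  obtain ⟨v, hv⟩ := hrefl (WeakDual.toStrongDual ψ)
  refine ⟨φ, v, hφ, fun f => ?_⟩
  rw [← dual_def, hv]
  exact tendsto_iff_forall_eval_tendsto_topDualPairing.mp hψ f

theorem exists_subseq_forall_dual_tendsto
    (hrefl : Function.Surjective (inclusionInDoubleDual ℝ X))
    {u : ℕ → X} {M : ℝ} (hM : ∀ n, ‖u n‖ ≤ M) :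
    ∃ (φ : ℕ → ℕ) (v : X), StrictMono φ ∧
      ∀ f : StrongDual ℝ X, Tendsto (fun j => f (u (φ j))) atTop (𝓝 (f v)) := by
  set Y := (Submodule.span ℝ (Set.range u)).topologicalClosure
  have hu : ∀ n, u n ∈ Y := fun n =>
    Submodule.le_topologicalClosure _ (Submodule.subset_span (Set.mem_range_self n))
  have : SeparableSpace Y := by
    refine IsSeparable.separableSpace ?_
    rw [Submodule.topologicalClosure_coe]
    exact (Set.countable_range u).isSeparable.span.closure
  obtain ⟨φ, v, hφ, hv⟩ := exists_subseq_forall_dual_tendsto_of_separableSpace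
    (Y.surjective_inclusionInDoubleDual hrefl (Submodule.isClosed_topologicalClosure _))
    (u := fun n => ⟨u n, hu n⟩) hM
  exact ⟨φ, v, hφ, fun f => hv (f.comp Y.subtypeL)⟩

end Reflexive

theorem IsSPlusOn.tendsto_of_apply_eq {X : Type*} [NormedAddCommGroup X] [NormedSpace ℝ X]
    {F : X → StrongDual ℝ X} {D : Set X} (hF : IsSPlusOn F D) {u : ℕ → X} {v : X}
    {w : StrongDual ℝ X} (hu : ∀ n, u n ∈ D)
    (hweak : ∀ f : StrongDual ℝ X, Tendsto (fun n => f (u n)) atTop (𝓝 (f v)))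
    (hFu : ∀ n, F (u n) = w) :
    Tendsto u atTop (𝓝 v) := by
  refine hF u v hu hweak (le_of_eq ?_)
  have : Tendsto (fun n => w (u n) - w v) atTop (𝓝 0) := by
    simpa using (hweak w).sub_const (w v)
  simpa [hFu, map_sub] using this.limsup_eq

theorem solution_set_compact_general {X : Type*} [NormedAddCommGroup X] [NormedSpace ℝ X]
    -- `X` is reflexive
    (hrefl : Function.Surjective (NormedSpace.inclusionInDoubleDual ℝ X))
    (U : Set X) (hUb : Bornology.IsBounded U)
    (F : X → StrongDual ℝ X)
    (hFc : ContinuousOn F (closure U)) (hFS : IsSPlusOn F (closure U))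
    (w : StrongDual ℝ X) :
    IsCompact {u ∈ closure U | F u = w} := by
  have hclosed : IsClosed {u ∈ closure U | F u = w} :=
    hFc.preimage_isClosed_of_isClosed isClosed_closure isClosed_singleton
  refine IsSeqCompact.isCompact fun u hu => ?_
  obtain ⟨M, hM⟩ := hUb.closure.exists_norm_le
  obtain ⟨φ, v, hφ, hweak⟩ := exists_subseq_forall_dual_tendsto hrefl fun n => hM _ (hu n).1
  have hlim : Tendsto (u ∘ φ) atTop (𝓝 v) :=
    hFS.tendsto_of_apply_eq (fun j => (hu (φ j)).1) hweak fun j => (hu (φ j)).2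
  exact ⟨v, hclosed.mem_of_tendsto hlim (Eventually.of_forall fun j => hu (φ j)), φ, hφ, hlim⟩

theorem solution_set_compact {X : Type*} [NormedAddCommGroup X] [NormedSpace ℝ X]
    [CompleteSpace X]
    -- `X` is reflexive
    (hrefl : Function.Surjective (NormedSpace.inclusionInDoubleDual ℝ X))
    (U : Set X) (hUo : IsOpen U) (hUb : Bornology.IsBounded U)
    (F : X → StrongDual ℝ X)
    (hFc : ContinuousOn F (closure U)) (hFS : IsSPlusOn F (closure U))
    (w : StrongDual ℝ X) (hw : ∀ u ∈ frontier U, F u ≠ w) :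
    IsCompact {u ∈ closure U | F u = w} :=
  solution_set_compact_general hrefl U hUb F hFc hFS w
end
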